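/- arXiv:2210.10404 — 3 statements merged into one kernel-verified Lean document; each statement's English description precedes it below -/
import Mathlib

section
/- Let n be even, and consider the RFM in which uᵢ(t) ≡ ūᵢ for i = 0,1,…,n-1 while u_n is an arbitrary continuous positive T-periodic function. Then there is no gain of entrainment: R_P ≤ R_C. -/
/-!
All fluxes `fᵢ = uᵢ xᵢ (1 - xᵢ₊₁)` have the same integral `J` over a period, because
`ẋᵢ = fᵢ₋₁ - fᵢ` and `xᵢ` is periodic. Integrating `d/dt (-log (1 - xᵢ)) = (fᵢ₋₁ - fᵢ) / (1 - xᵢ)`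
gives `∫ fᵢ / (1 - xᵢ) = ∫ uᵢ₋₁ xᵢ₋₁`, while `fᵢ / xᵢ = uᵢ (1 - xᵢ₊₁)`; Cauchy–Schwarz for `fᵢ`
against the weights `xᵢ` and `1 - xᵢ` then gives `1 / ∫ uᵢ (1 - xᵢ₊₁) + 1 / ∫ uᵢ₋₁ xᵢ₋₁ ≤ 1 / J`.
The equilibrium satisfies the same relation with equality, with `R` in place of `J`. If `R < J`
and `u₀, …, uₙ₋₁` are constant, these two relations push the inequality `eᵢ ≤ avg xᵢ` from
`i + 1` down to `i - 1`; starting at `n + 1` and going down in steps of two reaches `i = 1`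
exactly because `n` is even, and the flux out of site `0` then gives `J ≤ R`.
-/

open MeasureTheory intervalIntegral Real Filter

section CauchySchwarz

variable {α : Type*} [MeasurableSpace α] {μ : Measure α} {f a : α → ℝ}

theorem sq_integral_le_integral_mul_mul_integral_div (hf : ∀ x, 0 ≤ f x) (ha : ∀ x, 0 < a x)
    (hfi : Integrable f μ) (hfa : Integrable (fun x => f x * a x) μ)
    (hfda : Integrable (fun x => f x / a x) μ) :
    (∫ x, f x ∂μ) ^ 2 ≤ (∫ x, f x * a x ∂μ) * ∫ x, f x / a x ∂μ := by
  have hquad : ∀ c : ℝ, 0 ≤ (∫ x, f x * a x ∂μ) * (c * c) + (-2 * ∫ x, f x ∂μ) * c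
      + ∫ x, f x / a x ∂μ := by
    intro c
    have hexpand : ∀ x, f x * (c * a x - 1) ^ 2 / a x
        = c * c * (f x * a x) + -2 * c * f x + f x / a x := fun x => by
      field_simp [(ha x).ne']
      ring
    calc 0 ≤ ∫ x, f x * (c * a x - 1) ^ 2 / a x ∂μ :=
          integral_nonneg fun x => div_nonneg (mul_nonneg (hf x) (sq_nonneg _)) (ha x).le
      _ = _ := by
        have h₁ : Integrable (fun x => c * c * (f x * a x)) μ := hfa.const_mul _
        have h₂ : Integrable (fun x => -2 * c * f x) μ := hfi.const_mul _
        have h₁₂ : Integrable (fun x => c * c * (f x * a x) + -2 * c * f x) μ := h₁.add h₂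
        simp_rw [hexpand]
        rw [integral_add h₁₂ hfda, integral_add h₁ h₂, MeasureTheory.integral_const_mul,
          MeasureTheory.integral_const_mul]
        ring
  have := discrim_le_zero hquad
  rw [discrim] at this
  linarith

theorem inv_integral_div_add_inv_integral_div_one_sub_le (hf : ∀ x, 0 ≤ f x)
    (ha₀ : ∀ x, 0 < a x) (ha₁ : ∀ x, a x < 1) (hpos : 0 < ∫ x, f x ∂μ) (hfi : Integrable f μ)
    (hfa : Integrable (fun x => f x * a x) μ) (hfda : Integrable (fun x => f x / a x) μ)
    (hfdb : Integrable (fun x => f x / (1 - a x)) μ) :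
    (∫ x, f x / a x ∂μ)⁻¹ + (∫ x, f x / (1 - a x) ∂μ)⁻¹ ≤ (∫ x, f x ∂μ)⁻¹ := by
  set B := ∫ x, f x ∂μ
  set A := ∫ x, f x * a x ∂μ
  set C₁ := ∫ x, f x / a x ∂μ
  set C₂ := ∫ x, f x / (1 - a x) ∂μ
  have hb : ∀ x, 0 < 1 - a x := fun x => sub_pos.2 (ha₁ x)
  have hfb : Integrable (fun x => f x * (1 - a x)) μ :=
    (hfi.sub hfa).congr (ae_of_all _ fun x => by simp only [Pi.sub_apply]; ring)
  have hsplit : ∫ x, f x * (1 - a x) ∂μ = B - A := by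
    rw [← integral_sub hfi hfa]
    simp only [mul_one_sub]
  have cs₁ : B ^ 2 ≤ A * C₁ := sq_integral_le_integral_mul_mul_integral_div hf ha₀ hfi hfa hfda
  have cs₂ : B ^ 2 ≤ (B - A) * C₂ := hsplit ▸
    sq_integral_le_integral_mul_mul_integral_div hf hb hfi hfb hfdb
  have hC₁ : 0 < C₁ := hpos.trans_le <|
    integral_mono hfi hfda fun x => le_div_self (hf x) (ha₀ x) (ha₁ x).le
  have hC₂ : 0 < C₂ := hpos.trans_le <|
    integral_mono hfi hfdb fun x => le_div_self (hf x) (hb x) (by linarith [ha₀ x])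
  calc C₁⁻¹ + C₂⁻¹ = (B ^ 2 / C₁ + B ^ 2 / C₂) / B ^ 2 := by field_simp
    _ ≤ (A + (B - A)) / B ^ 2 := by
      gcongr
      exacts [(div_le_iff₀ hC₁).2 cs₁, (div_le_iff₀ hC₂).2 cs₂]
    _ = B⁻¹ := by rw [add_sub_cancel]; field_simp

end CauchySchwarz

section PeriodicBalance

variable {x g h : ℝ → ℝ} {a b : ℝ}

theorem integral_eq_integral_of_hasDerivAt_sub (hx : ∀ t, HasDerivAt x (g t - h t) t)
    (hg : Continuous g) (hh : Continuous h) (hab : x a = x b) :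
    ∫ t in a..b, g t = ∫ t in a..b, h t := by
  have := integral_eq_sub_of_hasDerivAt (fun t _ => hx t) ((hg.sub hh).intervalIntegrable a b)
  rw [integral_sub (hg.intervalIntegrable a b) (hh.intervalIntegrable a b), hab, sub_self] at this
  exact sub_eq_zero.1 this

theorem integral_div_one_sub_eq_of_hasDerivAt_sub (hx : ∀ t, HasDerivAt x (g t - h t) t)
    (hx₁ : ∀ t, x t < 1) (hg : Continuous g) (hh : Continuous h) (hab : x a = x b) :
    ∫ t in a..b, g t / (1 - x t) = ∫ t in a..b, h t / (1 - x t) := by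
  have hne : ∀ t, 1 - x t ≠ 0 := fun t => (sub_pos.2 (hx₁ t)).ne'
  have hxc : Continuous x := continuous_iff_continuousAt.2 fun t => (hx t).continuousAt
  refine integral_eq_integral_of_hasDerivAt_sub (x := fun t => -log (1 - x t)) (fun t => ?_)
    (hg.div (continuous_const.sub hxc) hne) (hh.div (continuous_const.sub hxc) hne)
    (by simp only [hab])
  exact (((hx t).const_sub 1).log (hne t)).neg.congr_deriv (by ring)

end PeriodicBalance

theorem inv_add_inv_eq_inv_of_mul_eq {K : Type*} [Field K] {p q e R : K} (hp : p * e = R)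
    (hq : q * (1 - e) = R) (hR : R ≠ 0) : p⁻¹ + q⁻¹ = R⁻¹ := by
  have hp₀ : p ≠ 0 := by rintro rfl; exact hR (by rw [← hp, zero_mul])
  have hq₀ : q ≠ 0 := by rintro rfl; exact hR (by rw [← hq, zero_mul])
  field_simp
  linear_combination -q * hp - p * hq

theorem le_of_inv_add_inv_le {K : Type*} [Field K] [LinearOrder K] [IsStrictOrderedRing K]
    {P Q P' Q' J R : K} (h : P⁻¹ + Q⁻¹ ≤ J⁻¹) (h' : P'⁻¹ + Q'⁻¹ = R⁻¹) (hR : 0 < R)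
    (hRJ : R ≤ J) (hP : 0 < P) (hPP' : P ≤ P') (hQ : 0 < Q) : Q' ≤ Q := by
  have hinv : Q⁻¹ ≤ Q'⁻¹ := by linarith [inv_anti₀ hR hRJ, inv_anti₀ hP hPP']
  exact (inv_le_inv₀ hQ (inv_pos.1 ((inv_pos.2 hQ).trans_le hinv))).1 hinv

theorem integral_mul_of_eq_average {T : ℝ} {c y : ℝ → ℝ}
    (hc : ∀ t, c t = 1 / T * ∫ s in (0:ℝ)..T, c s) :
    ∫ t in (0:ℝ)..T, c t * y t = (∫ t in (0:ℝ)..T, c t) * (1 / T * ∫ t in (0:ℝ)..T, y t) := by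
  rw [integral_congr fun t _ => by rw [hc t], intervalIntegral.integral_const_mul]
  ring

def rfmFlux (u x : ℕ → ℝ → ℝ) (i : ℕ) (t : ℝ) : ℝ := u i t * x i t * (1 - x (i + 1) t)

/-- Sites `1, …, n` are written `i + 1` with `i < n`; `x 0 ≡ 1` and `x (n + 1) ≡ 0` are the
boundary values. -/
structure IsRFMPeriodicSolution (n : ℕ) (T : ℝ) (u x : ℕ → ℝ → ℝ) : Prop where
  continuous_rate : ∀ i ≤ n, Continuous (u i)
  rate_pos : ∀ i ≤ n, ∀ t, 0 < u i t
  state_zero : ∀ t, x 0 t = 1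
  state_last : ∀ t, x (n + 1) t = 0
  mem_Ioo : ∀ i < n, ∀ t, x (i + 1) t ∈ Set.Ioo 0 1
  hasDerivAt : ∀ i < n, ∀ t,
    HasDerivAt (x (i + 1)) (rfmFlux u x i t - rfmFlux u x (i + 1) t) t
  periodic : ∀ i < n, x (i + 1) 0 = x (i + 1) T

namespace IsRFMPeriodicSolution

variable {n : ℕ} {T : ℝ} {u x : ℕ → ℝ → ℝ}

theorem state_pos (hsol : IsRFMPeriodicSolution n T u x) {i : ℕ} (hi : i ≤ n) (t : ℝ) :
    0 < x i t := by
  rcases i with _ | i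
  · simp [hsol.state_zero]
  · exact (hsol.mem_Ioo i hi t).1

theorem state_succ_lt_one (hsol : IsRFMPeriodicSolution n T u x) {i : ℕ} (hi : i ≤ n) (t : ℝ) :
    x (i + 1) t < 1 := by
  rcases hi.lt_or_eq with hi | rfl
  · exact (hsol.mem_Ioo i hi t).2
  · simp [hsol.state_last]

theorem continuous_state (hsol : IsRFMPeriodicSolution n T u x) {i : ℕ} (hi : i ≤ n + 1) :
    Continuous (x i) := by
  rcases i with _ | i
  · exact continuous_const.congr fun t => (hsol.state_zero t).symm
  rcases (Nat.succ_le_succ_iff.1 hi).lt_or_eq with hi | rfl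
  · exact continuous_iff_continuousAt.2 fun t => (hsol.hasDerivAt i hi t).continuousAt
  · exact continuous_const.congr fun t => (hsol.state_last t).symm

theorem continuous_rfmFlux (hsol : IsRFMPeriodicSolution n T u x) {i : ℕ} (hi : i ≤ n) :
    Continuous (rfmFlux u x i) :=
  ((hsol.continuous_rate i hi).mul (hsol.continuous_state (by omega))).mul
    (continuous_const.sub (hsol.continuous_state (by omega)))

theorem rfmFlux_pos (hsol : IsRFMPeriodicSolution n T u x) {i : ℕ} (hi : i ≤ n) (t : ℝ) :
    0 < rfmFlux u x i t :=
  mul_pos (mul_pos (hsol.rate_pos i hi t) (hsol.state_pos hi t))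
    (sub_pos.2 (hsol.state_succ_lt_one hi t))

theorem integral_rfmFlux_eq (hsol : IsRFMPeriodicSolution n T u x) {j : ℕ} (hj : j ≤ n) :
    ∫ t in (0:ℝ)..T, rfmFlux u x j t = ∫ t in (0:ℝ)..T, rfmFlux u x n t :=
  Nat.decreasingInduction (motive := fun j _ => ∫ t in (0:ℝ)..T, rfmFlux u x j t = _)
    (fun i hi ih => (integral_eq_integral_of_hasDerivAt_sub (hsol.hasDerivAt i hi)
      (hsol.continuous_rfmFlux hi.le) (hsol.continuous_rfmFlux hi) (hsol.periodic i hi)).trans ih)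
    rfl hj

theorem inv_integral_add_inv_integral_le (hsol : IsRFMPeriodicSolution n T u x) (hT : 0 < T)
    {i : ℕ} (hi : i < n) :
    (∫ t in (0:ℝ)..T, u (i + 1) t * (1 - x (i + 2) t))⁻¹ + (∫ t in (0:ℝ)..T, u i t * x i t)⁻¹
      ≤ (∫ t in (0:ℝ)..T, rfmFlux u x n t)⁻¹ := by
  have hx := hsol.mem_Ioo i hi
  have hf := hsol.continuous_rfmFlux (i := i + 1) hi
  have hxc := hsol.continuous_state (i := i + 1) (by omega)
  have hout : ∀ t, rfmFlux u x (i + 1) t / x (i + 1) t = u (i + 1) t * (1 - x (i + 2) t) :=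
    fun t => by rw [rfmFlux, mul_right_comm, mul_div_cancel_right₀ _ (hx t).1.ne']
  have hin : ∀ t, rfmFlux u x i t / (1 - x (i + 1) t) = u i t * x i t :=
    fun t => mul_div_cancel_right₀ _ (sub_pos.2 (hx t).2).ne'
  rw [← integral_congr fun t _ => hout t, ← integral_congr fun t _ => hin t,
    integral_div_one_sub_eq_of_hasDerivAt_sub (hsol.hasDerivAt i hi) (fun t => (hx t).2)
      (hsol.continuous_rfmFlux hi.le) hf (hsol.periodic i hi),
    ← hsol.integral_rfmFlux_eq hi]
  have hpos := intervalIntegral_pos_of_pos (hf.intervalIntegrable 0 T) (hsol.rfmFlux_pos hi) hT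
  simp only [integral_of_le hT.le] at hpos ⊢
  exact inv_integral_div_add_inv_integral_div_one_sub_le (fun t => (hsol.rfmFlux_pos hi t).le)
    (fun t => (hx t).1) (fun t => (hx t).2) hpos hf.integrableOn_Ioc (hf.mul hxc).integrableOn_Ioc
    (hf.div hxc fun t => (hx t).1.ne').integrableOn_Ioc
    (hf.div (continuous_const.sub hxc) fun t => (sub_pos.2 (hx t).2).ne').integrableOn_Ioc

theorem integral_rate_mul_one_sub_state_le (hsol : IsRFMPeriodicSolution n T u x) (hT : 0 < T)
    (hconst : ∀ i < n, ∀ t, u i t = 1 / T * ∫ s in (0:ℝ)..T, u i s) {k : ℕ} (hk : k ≤ n)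
    {ε : ℝ} (hε : ε ≤ 1 / T * ∫ t in (0:ℝ)..T, x (k + 1) t) :
    ∫ t in (0:ℝ)..T, u k t * (1 - x (k + 1) t) ≤ (∫ t in (0:ℝ)..T, u k t) * (1 - ε) := by
  have hU : 0 ≤ ∫ t in (0:ℝ)..T, u k t :=
    intervalIntegral.integral_nonneg hT.le fun t _ => (hsol.rate_pos k hk t).le
  refine le_of_eq_of_le ?_ (mul_le_mul_of_nonneg_left (sub_le_sub_left hε 1) hU)
  rcases hk.lt_or_eq with hk | rfl
  · rw [integral_mul_of_eq_average (hconst k hk), integral_sub intervalIntegrable_const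
      ((hsol.continuous_state (by omega)).intervalIntegrable _ _), intervalIntegral.integral_const,
      smul_eq_mul, sub_zero, mul_one]
    field_simp
  · simp [hsol.state_last]

theorem le_average_state_of_le_average_state (hsol : IsRFMPeriodicSolution n T u x)
    (hT : 0 < T) (hconst : ∀ i < n, ∀ t, u i t = 1 / T * ∫ s in (0:ℝ)..T, u i s) {e : ℕ → ℝ}
    {R : ℝ} (he : ∀ i ≤ n, (∫ t in (0:ℝ)..T, u i t) * e i * (1 - e (i + 1)) = R) (hR : 0 < R)
    (hRJ : R ≤ ∫ t in (0:ℝ)..T, rfmFlux u x n t) {i : ℕ} (hi : i < n)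
    (h : e (i + 2) ≤ 1 / T * ∫ t in (0:ℝ)..T, x (i + 2) t) :
    e i ≤ 1 / T * ∫ t in (0:ℝ)..T, x i t := by
  have hU : 0 < ∫ t in (0:ℝ)..T, u i t := intervalIntegral_pos_of_pos
    ((hsol.continuous_rate i hi.le).intervalIntegrable 0 T) (hsol.rate_pos i hi.le) hT
  have hP : 0 < ∫ t in (0:ℝ)..T, u (i + 1) t * (1 - x (i + 2) t) := intervalIntegral_pos_of_pos
    (((hsol.continuous_rate _ hi).mul
      (continuous_const.sub (hsol.continuous_state (by omega)))).intervalIntegrable 0 T)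
    (fun t => mul_pos (hsol.rate_pos _ hi t) (sub_pos.2 (hsol.state_succ_lt_one hi t))) hT
  have hQ : 0 < ∫ t in (0:ℝ)..T, u i t * x i t := intervalIntegral_pos_of_pos
    (((hsol.continuous_rate i hi.le).mul
      (hsol.continuous_state (by omega))).intervalIntegrable 0 T)
    (fun t => mul_pos (hsol.rate_pos i hi.le t) (hsol.state_pos hi.le t)) hT
  have hbalance : ((∫ t in (0:ℝ)..T, u (i + 1) t) * (1 - e (i + 2)))⁻¹
      + ((∫ t in (0:ℝ)..T, u i t) * e i)⁻¹ = R⁻¹ :=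
    inv_add_inv_eq_inv_of_mul_eq (by linear_combination he (i + 1) hi) (he i hi.le) hR.ne'
  have hcmp := le_of_inv_add_inv_le (hsol.inv_integral_add_inv_integral_le hT hi) hbalance hR
    hRJ hP (hsol.integral_rate_mul_one_sub_state_le hT hconst hi h) hQ
  rw [integral_mul_of_eq_average (hconst i hi)] at hcmp
  exact le_of_mul_le_mul_left hcmp hU

theorem integral_rfmFlux_le_of_even (hsol : IsRFMPeriodicSolution n T u x) (hT : 0 < T)
    (heven : Even n) (hconst : ∀ i < n, ∀ t, u i t = 1 / T * ∫ s in (0:ℝ)..T, u i s)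
    {e : ℕ → ℝ} (he₀ : e 0 = 1) (he_last : e (n + 1) = 0) (he_pos : 0 < e n)
    (hbal : ∀ i < n, (∫ t in (0:ℝ)..T, u i t) * e i * (1 - e (i + 1))
      = (∫ t in (0:ℝ)..T, u (i + 1) t) * e (i + 1) * (1 - e (i + 2))) :
    ∫ t in (0:ℝ)..T, rfmFlux u x n t ≤ (∫ t in (0:ℝ)..T, u n t) * e n := by
  set R := (∫ t in (0:ℝ)..T, u n t) * e n
  have he : ∀ i ≤ n, (∫ t in (0:ℝ)..T, u i t) * e i * (1 - e (i + 1)) = R := fun i hi =>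
    Nat.decreasingInduction
      (motive := fun i _ => (∫ t in (0:ℝ)..T, u i t) * e i * (1 - e (i + 1)) = R)
      (fun k hk ih => (hbal k hk).trans ih) (by rw [he_last, sub_zero, mul_one]) hi
  have hR : 0 < R := mul_pos (intervalIntegral_pos_of_pos
    ((hsol.continuous_rate n le_rfl).intervalIntegrable 0 T) (hsol.rate_pos n le_rfl) hT) he_pos
  by_contra! hRJ
  obtain ⟨p, rfl⟩ := even_iff_two_dvd.1 heven
  have hodd : ∀ k ≤ p, e (2 * k + 1) ≤ 1 / T * ∫ t in (0:ℝ)..T, x (2 * k + 1) t := fun k hk =>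
    Nat.decreasingInduction
      (motive := fun k _ => e (2 * k + 1) ≤ 1 / T * ∫ t in (0:ℝ)..T, x (2 * k + 1) t)
      (fun k hk ih => hsol.le_average_state_of_le_average_state hT hconst he hR hRJ.le
        (by omega) (by rwa [show 2 * (k + 1) + 1 = 2 * k + 1 + 2 by ring] at ih))
      (by simp [he_last, hsol.state_last]) hk
  have hJR : ∫ t in (0:ℝ)..T, rfmFlux u x (2 * p) t ≤ R :=
    calc ∫ t in (0:ℝ)..T, rfmFlux u x (2 * p) t = ∫ t in (0:ℝ)..T, rfmFlux u x 0 t :=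
          (hsol.integral_rfmFlux_eq (Nat.zero_le _)).symm
      _ = ∫ t in (0:ℝ)..T, u 0 t * (1 - x 1 t) :=
          integral_congr fun t _ => by simp [rfmFlux, hsol.state_zero]
      _ ≤ (∫ t in (0:ℝ)..T, u 0 t) * (1 - e 1) :=
          hsol.integral_rate_mul_one_sub_state_le hT hconst (Nat.zero_le _) (hodd 0 (Nat.zero_le _))
      _ = R := by simpa [he₀] using he 0 (Nat.zero_le _)
  exact hRJ.not_ge hJR

end IsRFMPeriodicSolution

theorem rfm_no_goe_even_only_un_varying_general
    (n : ℕ) (hn : 1 ≤ n) (T : ℝ) (hT : 0 < T)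
    (u : ℕ → ℝ → ℝ) (x : ℕ → ℝ → ℝ) (e : ℕ → ℝ)
    (hu_cont : ∀ i, i ≤ n → Continuous (u i))
    (hu_pos : ∀ i, i ≤ n → ∀ t, 0 < u i t)
    (hx0 : ∀ t, x 0 t = 1) (hxtop : ∀ t, x (n+1) t = 0)
    (hxdiff : ∀ i, 1 ≤ i → i ≤ n → Differentiable ℝ (x i))
    (hxper : ∀ i, 1 ≤ i → i ≤ n → ∀ t, x i (t + T) = x i t)
    (hxmem : ∀ i, 1 ≤ i → i ≤ n → ∀ t, x i t ∈ Set.Ioo (0:ℝ) 1)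
    (hode : ∀ i, 1 ≤ i → i ≤ n → ∀ t,
      deriv (x i) t
        = u (i-1) t * x (i-1) t * (1 - x i t) - u i t * x i t * (1 - x (i+1) t))
    (he0 : e 0 = 1) (hetop : e (n+1) = 0)
    (hemem : ∀ i, 1 ≤ i → i ≤ n → e i ∈ Set.Ioo (0:ℝ) 1)
    (heq : ∀ i, 1 ≤ i → i ≤ n →
      (1/T * ∫ t in (0:ℝ)..T, u (i-1) t) * e (i-1) * (1 - e i)
        = (1/T * ∫ t in (0:ℝ)..T, u i t) * e i * (1 - e (i+1)))
    (heven : Even n)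
    (hconst : ∀ i, i ≤ n - 1 →
      ∀ t, u i t = 1/T * ∫ s in (0:ℝ)..T, u i s) :
    1/T * ∫ t in (0:ℝ)..T, u n t * x n t ≤ (1/T * ∫ t in (0:ℝ)..T, u n t) * e n := by
  have hsol : IsRFMPeriodicSolution n T u x :=
    { continuous_rate := hu_cont
      rate_pos := hu_pos
      state_zero := hx0
      state_last := hxtop
      mem_Ioo := fun i hi => hxmem (i + 1) (by omega) hi
      hasDerivAt := fun i hi t => by
        simpa [hode (i + 1) (by omega) hi t, rfmFlux] using
          (hxdiff (i + 1) (by omega) hi t).hasDerivAt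
      periodic := fun i hi => by simpa using (hxper (i + 1) (by omega) hi 0).symm }
  have hbal : ∀ i < n, (∫ t in (0:ℝ)..T, u i t) * e i * (1 - e (i + 1))
      = (∫ t in (0:ℝ)..T, u (i + 1) t) * e (i + 1) * (1 - e (i + 2)) := fun i hi => by
    have h := heq (i + 1) (by omega) hi
    rw [Nat.add_sub_cancel] at h
    field_simp at h
    linear_combination h
  have hflux : ∫ t in (0:ℝ)..T, u n t * x n t = ∫ t in (0:ℝ)..T, rfmFlux u x n t :=
    integral_congr fun t _ => by simp [rfmFlux, hxtop]
  rw [mul_assoc, hflux]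
  exact mul_le_mul_of_nonneg_left (hsol.integral_rfmFlux_le_of_even hT heven
    (fun i hi => hconst i (by omega)) he0 hetop (hemem n hn le_rfl).1 hbal) (by positivity)

theorem rfm_no_goe_even_only_un_varying
    (n : ℕ) (hn : 1 ≤ n) (T : ℝ) (hT : 0 < T)
    (u : ℕ → ℝ → ℝ) (x : ℕ → ℝ → ℝ) (e : ℕ → ℝ)
    (hu_cont : ∀ i, i ≤ n → Continuous (u i))
    (hu_pos : ∀ i, i ≤ n → ∀ t, 0 < u i t)
    (hu_per : ∀ i, i ≤ n → ∀ t, u i (t + T) = u i t)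
    (hx0 : ∀ t, x 0 t = 1) (hxtop : ∀ t, x (n+1) t = 0)
    (hxdiff : ∀ i, 1 ≤ i → i ≤ n → Differentiable ℝ (x i))
    (hxper : ∀ i, 1 ≤ i → i ≤ n → ∀ t, x i (t + T) = x i t)
    (hxmem : ∀ i, 1 ≤ i → i ≤ n → ∀ t, x i t ∈ Set.Ioo (0:ℝ) 1)
    (hode : ∀ i, 1 ≤ i → i ≤ n → ∀ t,
      deriv (x i) t
        = u (i-1) t * x (i-1) t * (1 - x i t) - u i t * x i t * (1 - x (i+1) t))
    (he0 : e 0 = 1) (hetop : e (n+1) = 0)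
    (hemem : ∀ i, 1 ≤ i → i ≤ n → e i ∈ Set.Ioo (0:ℝ) 1)
    (heq : ∀ i, 1 ≤ i → i ≤ n →
      (1/T * ∫ t in (0:ℝ)..T, u (i-1) t) * e (i-1) * (1 - e i)
        = (1/T * ∫ t in (0:ℝ)..T, u i t) * e i * (1 - e (i+1)))
    (heven : Even n)
    (hconst : ∀ i, i ≤ n - 1 →
      ∀ t, u i t = 1/T * ∫ s in (0:ℝ)..T, u i s) :
    1/T * ∫ t in (0:ℝ)..T, u n t * x n t ≤ (1/T * ∫ t in (0:ℝ)..T, u n t) * e n :=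
  rfm_no_goe_even_only_un_varying_general n hn T hT u x e hu_cont hu_pos hx0 hxtop hxdiff hxper
    hxmem hode he0 hetop hemem heq heven hconst
end

section
/- Let n be even, and consider the RFM in which uᵢ(t) ≡ ūᵢ for i = 1,…,n while u₀ is an arbitrary continuous positive T-periodic function. Then there is no gain of entrainment: R_P ≤ R_C. -/
open MeasureTheory intervalIntegral Real

/-!
Write `R = ∫₀ᵀ uₙ xₙ`. Periodicity of `x_{p+1}` turns its equation into flux conservation,
`∫ u_j x_j (1 - x_{j+1}) = R` for every `j`, and periodicity of `log x_{p+1}` gives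
`∫ u_p x_p (1 - x_{p+1}) / x_{p+1} = ∫ u_{p+1} (1 - x_{p+2})`. Cauchy–Schwarz for the weight
`u_p x_p`, applied to `x_{p+1}` and `1 / x_{p+1}`, then yields `R A_p ≤ D_{p+1} (A_p - R)` with
`A_p = ∫ u_p x_p` and `D_{p+1} = ∫ u_{p+1} (1 - x_{p+2})`.

When `u₁, …, uₙ` are constant, `A_p` and `D_{p+1}` are products of mean rates and mean
occupancies `ρᵢ = (1/T) ∫ xᵢ`. If `R_P > R_C`, these inequalities and the equilibrium relations
force `ρᵢ > eᵢ` for `i = n, n - 2, n - 4, …`; for even `n` this reaches `i = 0`, where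
`ρ₀ = e₀ = 1`.
-/

theorem Nat.eq_of_forall_lt_eq_succ {β : Type*} {f : ℕ → β} {n : ℕ}
    (h : ∀ j < n, f j = f (j + 1)) {j : ℕ} (hj : j ≤ n) : f j = f n :=
  Nat.decreasingInduction (motive := fun j _ => f j = f n) (fun k hk ih => (h k hk).trans ih)
    rfl hj

theorem intervalIntegral.integral_eq_of_hasDerivAt_sub {f g h : ℝ → ℝ} {a b : ℝ}
    (hderiv : ∀ t ∈ Set.uIcc a b, HasDerivAt f (g t - h t) t)
    (hg : IntervalIntegrable g volume a b) (hh : IntervalIntegrable h volume a b)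
    (hfab : f a = f b) : ∫ t in a..b, g t = ∫ t in a..b, h t := by
  have := integral_eq_sub_of_hasDerivAt hderiv (hg.sub hh)
  rw [integral_sub hg hh, hfab, sub_self] at this
  exact sub_eq_zero.1 this

theorem intervalIntegral.integral_div_eq_of_hasDerivAt_sub {f g h : ℝ → ℝ} {a b : ℝ}
    (hderiv : ∀ t ∈ Set.uIcc a b, HasDerivAt f (g t - h t) t)
    (hf : ∀ t ∈ Set.uIcc a b, f t ≠ 0)
    (hg : IntervalIntegrable (fun t => g t / f t) volume a b)
    (hh : IntervalIntegrable (fun t => h t / f t) volume a b)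
    (hfab : f a = f b) : ∫ t in a..b, g t / f t = ∫ t in a..b, h t / f t :=
  integral_eq_of_hasDerivAt_sub (f := fun t => log (f t))
    (fun t ht => sub_div (g t) (h t) (f t) ▸ (hderiv t ht).log (hf t ht)) hg hh
    (by rw [hfab])

theorem MeasureTheory.integral_sq_le_integral_mul_mul_integral_div {α : Type*} [MeasurableSpace α]
    {μ : Measure α} {w g : α → ℝ} (hw : ∀ a, 0 ≤ w a) (hg : ∀ a, 0 < g a)
    (hwi : Integrable w μ) (hwg : Integrable (fun a => w a * g a) μ)
    (hwdg : Integrable (fun a => w a / g a) μ) :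
    (∫ a, w a ∂μ) ^ 2 ≤ (∫ a, w a * g a ∂μ) * ∫ a, w a / g a ∂μ := by
  have hquad : ∀ s : ℝ, 0 ≤ (∫ a, w a * g a ∂μ) * (s * s) + (-2 * ∫ a, w a ∂μ) * s
      + ∫ a, w a / g a ∂μ := by
    intro s
    have hexpand : ∀ a, w a * (s * g a - 1) ^ 2 / g a
        = s * s * (w a * g a) - 2 * s * w a + w a / g a := by
      intro a
      field_simp [(hg a).ne']
      ring
    calc 0 ≤ ∫ a, w a * (s * g a - 1) ^ 2 / g a ∂μ :=
          integral_nonneg fun a => div_nonneg (mul_nonneg (hw a) (sq_nonneg _)) (hg a).le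
      _ = _ := by
          have hpoly : Integrable (fun a => s * s * (w a * g a) - 2 * s * w a) μ :=
            (hwg.const_mul _).sub (hwi.const_mul _)
          simp only [hexpand]
          rw [integral_add hpoly hwdg,
            integral_sub (hwg.const_mul _) (hwi.const_mul _), MeasureTheory.integral_const_mul,
            MeasureTheory.integral_const_mul]
          ring
  have := discrim_le_zero hquad
  rw [discrim] at this
  linarith

theorem mean_mul_of_forall_eq {f g : ℝ → ℝ} {c : ℝ} (T : ℝ) (hf : ∀ t, f t = c) :
    1 / T * ∫ t in (0:ℝ)..T, f t * g t = c * (1 / T * ∫ t in (0:ℝ)..T, g t) := by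
  simp only [hf, intervalIntegral.integral_const_mul]
  ring

theorem mean_one_sub {g : ℝ → ℝ} {T : ℝ} (hT : T ≠ 0) (hg : IntervalIntegrable g volume 0 T) :
    1 / T * ∫ t in (0:ℝ)..T, (1 - g t) = 1 - 1 / T * ∫ t in (0:ℝ)..T, g t := by
  rw [integral_sub intervalIntegrable_const hg, intervalIntegral.integral_const]
  field_simp
  ring

structure IsPeriodicRFMSolution (n : ℕ) (T : ℝ) (u x : ℕ → ℝ → ℝ) : Prop where
  rate_continuous : ∀ i, i ≤ n → Continuous (u i)
  rate_pos : ∀ i, i ≤ n → ∀ t, 0 < u i t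
  entry : ∀ t, x 0 t = 1
  exit : ∀ t, x (n + 1) t = 0
  differentiable : ∀ i, 1 ≤ i → i ≤ n → Differentiable ℝ (x i)
  periodic : ∀ i, 1 ≤ i → i ≤ n → ∀ t, x i (t + T) = x i t
  mem_Ioo : ∀ i, 1 ≤ i → i ≤ n → ∀ t, x i t ∈ Set.Ioo (0:ℝ) 1
  deriv_eq : ∀ i, 1 ≤ i → i ≤ n → ∀ t,
    deriv (x i) t = u (i-1) t * x (i-1) t * (1 - x i t) - u i t * x i t * (1 - x (i+1) t)

namespace IsPeriodicRFMSolution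

variable {n : ℕ} {T : ℝ} {u x : ℕ → ℝ → ℝ}

theorem continuous_state (h : IsPeriodicRFMSolution n T u x) {i : ℕ} (hi : i ≤ n + 1) :
    Continuous (x i) := by
  rcases Nat.eq_zero_or_pos i with rfl | hi0
  · exact continuous_const.congr fun t => (h.entry t).symm
  rcases hi.eq_or_lt with rfl | hin
  · exact continuous_const.congr fun t => (h.exit t).symm
  exact (h.differentiable i hi0 (by omega)).continuous

theorem state_pos (h : IsPeriodicRFMSolution n T u x) {i : ℕ} (hi : i ≤ n) (t : ℝ) :
    0 < x i t := by
  rcases Nat.eq_zero_or_pos i with rfl | hi0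
  · simp [h.entry]
  · exact (h.mem_Ioo i hi0 hi t).1

theorem continuous_flux (h : IsPeriodicRFMSolution n T u x) {j : ℕ} (hj : j ≤ n) :
    Continuous fun t => u j t * x j t * (1 - x (j+1) t) :=
  ((h.rate_continuous j hj).mul (h.continuous_state (by omega))).mul
    (continuous_const.sub (h.continuous_state (by omega)))

theorem hasDerivAt_state (h : IsPeriodicRFMSolution n T u x) {p : ℕ} (hp : p < n) (t : ℝ) :
    HasDerivAt (x (p+1))
      (u p t * x p t * (1 - x (p+1) t) - u (p+1) t * x (p+1) t * (1 - x (p+2) t)) t := by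
  have := h.deriv_eq (p+1) (by omega) hp t
  rw [Nat.add_sub_cancel] at this
  exact this ▸ (h.differentiable (p+1) (by omega) hp t).hasDerivAt

theorem state_zero_eq_state_period (h : IsPeriodicRFMSolution n T u x) {p : ℕ} (hp : p < n) :
    x (p+1) 0 = x (p+1) T := by
  simpa using (h.periodic (p+1) (by omega) hp 0).symm

theorem integral_flux_eq (h : IsPeriodicRFMSolution n T u x) {j : ℕ} (hj : j ≤ n) :
    ∫ t in (0:ℝ)..T, u j t * x j t * (1 - x (j+1) t) = ∫ t in (0:ℝ)..T, u n t * x n t := by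
  have hsucc : ∀ p < n, ∫ t in (0:ℝ)..T, u p t * x p t * (1 - x (p+1) t)
      = ∫ t in (0:ℝ)..T, u (p+1) t * x (p+1) t * (1 - x (p+1+1) t) := fun p hp =>
    integral_eq_of_hasDerivAt_sub (fun t _ => h.hasDerivAt_state hp t)
      ((h.continuous_flux hp.le).intervalIntegrable _ _)
      ((h.continuous_flux hp).intervalIntegrable _ _) (h.state_zero_eq_state_period hp)
  rw [Nat.eq_of_forall_lt_eq_succ
    (f := fun j => ∫ t in (0:ℝ)..T, u j t * x j t * (1 - x (j+1) t)) hsucc hj]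
  simp [h.exit]

theorem integral_flux_div_state_eq (h : IsPeriodicRFMSolution n T u x) {p : ℕ} (hp : p < n) :
    ∫ t in (0:ℝ)..T, u p t * x p t * (1 - x (p+1) t) / x (p+1) t
      = ∫ t in (0:ℝ)..T, u (p+1) t * (1 - x (p+2) t) := by
  have hx : ∀ t, x (p+1) t ≠ 0 := fun t => (h.state_pos hp t).ne'
  rw [integral_div_eq_of_hasDerivAt_sub (fun t _ => h.hasDerivAt_state hp t) (fun t _ => hx t)
    (((h.continuous_flux hp.le).div (h.continuous_state (by omega)) hx).intervalIntegrable _ _)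
    (((h.continuous_flux hp).div (h.continuous_state (by omega)) hx).intervalIntegrable _ _)
    (h.state_zero_eq_state_period hp)]
  refine integral_congr fun t _ => ?_
  field_simp [hx t]

theorem integral_throughput_mul_le (h : IsPeriodicRFMSolution n T u x) (hT : 0 ≤ T) {p : ℕ}
    (hp : p < n) :
    (∫ t in (0:ℝ)..T, u n t * x n t) * ∫ t in (0:ℝ)..T, u p t * x p t
      ≤ (∫ t in (0:ℝ)..T, u (p+1) t * (1 - x (p+2) t))
        * ((∫ t in (0:ℝ)..T, u p t * x p t) - ∫ t in (0:ℝ)..T, u n t * x n t) := by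
  have hw : Continuous fun t => u p t * x p t :=
    (h.rate_continuous p hp.le).mul (h.continuous_state (by omega))
  have hg : Continuous (x (p+1)) := h.continuous_state (by omega)
  have hg0 : ∀ t, x (p+1) t ≠ 0 := fun t => (h.state_pos hp t).ne'
  have hflux := h.integral_flux_eq hp.le
  have hwg : ∫ t in (0:ℝ)..T, u p t * x p t * x (p+1) t
      = (∫ t in (0:ℝ)..T, u p t * x p t) - ∫ t in (0:ℝ)..T, u n t * x n t := by
    rw [← hflux, ← integral_sub (hw.intervalIntegrable _ _)
      ((h.continuous_flux hp.le).intervalIntegrable _ _)]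
    exact integral_congr fun t _ => by ring
  have hwdg : ∫ t in (0:ℝ)..T, u p t * x p t / x (p+1) t
      = (∫ t in (0:ℝ)..T, u p t * x p t) + ∫ t in (0:ℝ)..T, u (p+1) t * (1 - x (p+2) t) := by
    have hdiv : IntervalIntegrable (fun t => u p t * x p t * (1 - x (p+1) t) / x (p+1) t)
        volume 0 T := ((h.continuous_flux hp.le).div hg hg0).intervalIntegrable _ _
    rw [← h.integral_flux_div_state_eq hp, ← integral_add (hw.intervalIntegrable _ _) hdiv]
    exact integral_congr fun t _ => by field_simp [hg0 t]; ring
  have hCS : (∫ t in (0:ℝ)..T, u p t * x p t) ^ 2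
      ≤ (∫ t in (0:ℝ)..T, u p t * x p t * x (p+1) t)
        * ∫ t in (0:ℝ)..T, u p t * x p t / x (p+1) t := by
    simp only [integral_of_le hT]
    exact integral_sq_le_integral_mul_mul_integral_div
      (fun t => (mul_pos (h.rate_pos p hp.le t) (h.state_pos hp.le t)).le) (h.state_pos hp)
      (hw.intervalIntegrable 0 T).1 ((hw.mul hg).intervalIntegrable 0 T).1
      ((hw.div hg hg0).intervalIntegrable 0 T).1
  rw [hwg, hwdg] at hCS
  linear_combination hCS

theorem mean_state_mem_Ioc (h : IsPeriodicRFMSolution n T u x) (hT : 0 < T) {i : ℕ}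
    (hi : i ≤ n) : 1 / T * ∫ t in (0:ℝ)..T, x i t ∈ Set.Ioc 0 1 := by
  have hx : IntervalIntegrable (x i) volume 0 T :=
    (h.continuous_state (by omega)).intervalIntegrable 0 T
  refine ⟨mul_pos (by positivity) (intervalIntegral_pos_of_pos_on hx
    (fun t _ => h.state_pos hi t) hT), ?_⟩
  have hle : ∫ t in (0:ℝ)..T, x i t ≤ ∫ _ in (0:ℝ)..T, (1:ℝ) := by
    refine integral_mono_on hT.le hx intervalIntegrable_const fun t _ => ?_
    rcases Nat.eq_zero_or_pos i with rfl | hi0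
    · exact (h.entry t).le
    · exact (h.mem_Ioo i hi0 hi t).2.le
  rw [intervalIntegral.integral_const, smul_eq_mul, mul_one, sub_zero] at hle
  rw [div_mul_eq_mul_div, one_mul, div_le_one hT]
  exact hle

theorem mean_rate_pos (h : IsPeriodicRFMSolution n T u x) (hT : 0 < T) {i : ℕ} (hi : i ≤ n) :
    0 < 1 / T * ∫ t in (0:ℝ)..T, u i t :=
  mul_pos (one_div_pos.2 hT) (intervalIntegral_pos_of_pos_on
    ((h.rate_continuous i hi).intervalIntegrable _ _) (fun t _ => h.rate_pos i hi t) hT)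

end IsPeriodicRFMSolution

/- `a i` and `ρ i` stand for the mean rate and the mean occupancy of site `i`, `e` for the
equilibrium of the averaged rates and `r` for the periodic throughput `R_P`. -/
namespace RFM

theorem equilibrium_lt_mean_of_add_two {a ρ e : ℕ → ℝ} {r c : ℝ} {i : ℕ}
    (ha : 0 < a i) (ha₁ : 0 < a (i+1)) (hρ : 0 < ρ i) (hρ₂ : ρ (i+2) ≤ 1)
    (he : 0 ≤ e i) (he₁ : 0 ≤ e (i+1)) (hr : 0 < r) (hcr : c < r)
    (hequil : a i * e i * (1 - e (i+1)) = c) (hequil₁ : a (i+1) * e (i+1) * (1 - e (i+2)) = c)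
    (hsite : r * (a i * ρ i) ≤ a (i+1) * (1 - ρ (i+2)) * (a i * ρ i - r))
    (h₂ : e (i+2) ≤ ρ (i+2)) : e i < ρ i := by
  set A := a i * ρ i
  have hA : 0 < A := mul_pos ha hρ
  have hAr : 0 < A - r := by
    by_contra! hle
    nlinarith [mul_nonneg ha₁.le (sub_nonneg.2 hρ₂)]
  have hthrough : r < (1 - e (i+1)) * A := by
    have : e (i+1) * (r * A) < r * (A - r) := calc
      e (i+1) * (r * A) ≤ e (i+1) * (a (i+1) * (1 - ρ (i+2)) * (A - r)) :=
        mul_le_mul_of_nonneg_left hsite he₁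
      _ ≤ e (i+1) * (a (i+1) * (1 - e (i+2)) * (A - r)) := by gcongr
      _ = c * (A - r) := by rw [← hequil₁]; ring
      _ < r * (A - r) := mul_lt_mul_of_pos_right hcr hAr
    nlinarith
  have : e i * r < ρ i * r := calc
    e i * r ≤ e i * ((1 - e (i+1)) * A) := mul_le_mul_of_nonneg_left hthrough.le he
    _ = c * ρ i := by rw [← hequil]; ring
    _ < r * ρ i := mul_lt_mul_of_pos_right hcr hρ
    _ = ρ i * r := mul_comm _ _
  exact lt_of_mul_lt_mul_right this hr.le

theorem throughput_le_of_even {n : ℕ} (hn : Even n) {a ρ e : ℕ → ℝ} {r : ℝ}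
    (ha : ∀ i ≤ n, 0 < a i) (hρ : ∀ i ≤ n, ρ i ∈ Set.Ioc 0 1) (he : ∀ i ≤ n, 0 ≤ e i)
    (he0 : e 0 = 1) (hequil : ∀ i ≤ n, a i * e i * (1 - e (i+1)) = a n * e n)
    (hr : r = a n * ρ n)
    (hsite : ∀ i, i + 2 ≤ n → r * (a i * ρ i) ≤ a (i+1) * (1 - ρ (i+2)) * (a i * ρ i - r)) :
    r ≤ a n * e n := by
  by_contra! hlt
  have hr0 : 0 < r := hr ▸ mul_pos (ha n le_rfl) (hρ n le_rfl).1
  obtain ⟨k, rfl⟩ := hn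
  have hbase : e (2 * k) < ρ (2 * k) := by
    rw [two_mul]
    exact lt_of_mul_lt_mul_left (hr ▸ hlt) (ha _ le_rfl).le
  have key : ∀ m ≤ k, e (2 * m) < ρ (2 * m) := fun m hm =>
    Nat.decreasingInduction (motive := fun m _ => e (2 * m) < ρ (2 * m))
      (fun m hm ih => equilibrium_lt_mean_of_add_two (ha _ (by omega)) (ha _ (by omega))
        (hρ _ (by omega)).1 (hρ _ (by omega)).2 (he _ (by omega)) (he _ (by omega)) hr0 hlt
        (hequil _ (by omega)) (hequil _ (by omega)) (hsite _ (by omega)) ih.le)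
      hbase hm
  exact (key 0 k.zero_le).not_ge (he0 ▸ (hρ 0 (by omega)).2)

end RFM

theorem rfm_no_goe_even_only_u0_varying_general
    (n : ℕ) (T : ℝ) (hT : 0 < T)
    (u : ℕ → ℝ → ℝ) (x : ℕ → ℝ → ℝ) (e : ℕ → ℝ)
    (hu_cont : ∀ i, i ≤ n → Continuous (u i))
    (hu_pos : ∀ i, i ≤ n → ∀ t, 0 < u i t)
    (hx0 : ∀ t, x 0 t = 1) (hxtop : ∀ t, x (n+1) t = 0)
    (hxdiff : ∀ i, 1 ≤ i → i ≤ n → Differentiable ℝ (x i))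
    (hxper : ∀ i, 1 ≤ i → i ≤ n → ∀ t, x i (t + T) = x i t)
    (hxmem : ∀ i, 1 ≤ i → i ≤ n → ∀ t, x i t ∈ Set.Ioo (0:ℝ) 1)
    (hode : ∀ i, 1 ≤ i → i ≤ n → ∀ t,
      deriv (x i) t
        = u (i-1) t * x (i-1) t * (1 - x i t) - u i t * x i t * (1 - x (i+1) t))
    (he0 : e 0 = 1) (hetop : e (n+1) = 0)
    (hemem : ∀ i, 1 ≤ i → i ≤ n → e i ∈ Set.Ioo (0:ℝ) 1)
    (heq : ∀ i, 1 ≤ i → i ≤ n →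
      (1/T * ∫ t in (0:ℝ)..T, u (i-1) t) * e (i-1) * (1 - e i)
        = (1/T * ∫ t in (0:ℝ)..T, u i t) * e i * (1 - e (i+1)))
    (heven : Even n)
    (hconst : ∀ i, 1 ≤ i → i ≤ n →
      ∀ t, u i t = 1/T * ∫ s in (0:ℝ)..T, u i s) :
    1/T * ∫ t in (0:ℝ)..T, u n t * x n t ≤ (1/T * ∫ t in (0:ℝ)..T, u n t) * e n := by
  have h : IsPeriodicRFMSolution n T u x :=
    ⟨hu_cont, hu_pos, hx0, hxtop, hxdiff, hxper, hxmem, hode⟩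
  have hA : ∀ i ≤ n, 1/T * ∫ t in (0:ℝ)..T, u i t * x i t
      = (1/T * ∫ t in (0:ℝ)..T, u i t) * (1/T * ∫ t in (0:ℝ)..T, x i t) := by
    intro i hi
    rcases Nat.eq_zero_or_pos i with rfl | hi0
    · simp [hx0, hT.ne']
    · exact mean_mul_of_forall_eq T (hconst i hi0 hi)
  have hD : ∀ i, i + 1 ≤ n → 1/T * ∫ t in (0:ℝ)..T, u (i+1) t * (1 - x (i+2) t)
      = (1/T * ∫ t in (0:ℝ)..T, u (i+1) t) * (1 - 1/T * ∫ t in (0:ℝ)..T, x (i+2) t) := by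
    intro i hi
    rw [mean_mul_of_forall_eq T (hconst (i+1) (by omega) hi),
      mean_one_sub hT.ne' ((h.continuous_state (by omega)).intervalIntegrable _ _)]
  have hequil : ∀ i ≤ n, (1/T * ∫ t in (0:ℝ)..T, u i t) * e i * (1 - e (i+1))
      = (1/T * ∫ t in (0:ℝ)..T, u n t) * e n := fun i hi => by
    rw [Nat.eq_of_forall_lt_eq_succ
      (f := fun i => (1/T * ∫ t in (0:ℝ)..T, u i t) * e i * (1 - e (i+1)))
      (fun j hj => by simpa using heq (j+1) (by omega) hj) hi, hetop, sub_zero, mul_one]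
  have he : ∀ i ≤ n, 0 ≤ e i := fun i hi => by
    rcases Nat.eq_zero_or_pos i with rfl | hi0
    · exact he0 ▸ zero_le_one
    · exact (hemem i hi0 hi).1.le
  refine RFM.throughput_le_of_even heven (fun i hi => h.mean_rate_pos hT hi)
    (fun i hi => h.mean_state_mem_Ioc hT hi) he he0 hequil (hA n le_rfl) fun i hi => ?_
  rw [← hA i (by omega), ← hD i (by omega)]
  linear_combination (1/T)^2 * h.integral_throughput_mul_le hT.le (p := i) (by omega)

theorem rfm_no_goe_even_only_u0_varying
    (n : ℕ) (hn : 1 ≤ n) (T : ℝ) (hT : 0 < T)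
    (u : ℕ → ℝ → ℝ) (x : ℕ → ℝ → ℝ) (e : ℕ → ℝ)
    (hu_cont : ∀ i, i ≤ n → Continuous (u i))
    (hu_pos : ∀ i, i ≤ n → ∀ t, 0 < u i t)
    (hu_per : ∀ i, i ≤ n → ∀ t, u i (t + T) = u i t)
    (hx0 : ∀ t, x 0 t = 1) (hxtop : ∀ t, x (n+1) t = 0)
    (hxdiff : ∀ i, 1 ≤ i → i ≤ n → Differentiable ℝ (x i))
    (hxper : ∀ i, 1 ≤ i → i ≤ n → ∀ t, x i (t + T) = x i t)
    (hxmem : ∀ i, 1 ≤ i → i ≤ n → ∀ t, x i t ∈ Set.Ioo (0:ℝ) 1)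
    (hode : ∀ i, 1 ≤ i → i ≤ n → ∀ t,
      deriv (x i) t
        = u (i-1) t * x (i-1) t * (1 - x i t) - u i t * x i t * (1 - x (i+1) t))
    (he0 : e 0 = 1) (hetop : e (n+1) = 0)
    (hemem : ∀ i, 1 ≤ i → i ≤ n → e i ∈ Set.Ioo (0:ℝ) 1)
    (heq : ∀ i, 1 ≤ i → i ≤ n →
      (1/T * ∫ t in (0:ℝ)..T, u (i-1) t) * e (i-1) * (1 - e i)
        = (1/T * ∫ t in (0:ℝ)..T, u i t) * e i * (1 - e (i+1)))
    (heven : Even n)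
    (hconst : ∀ i, 1 ≤ i → i ≤ n →
      ∀ t, u i t = 1/T * ∫ s in (0:ℝ)..T, u i s) :
    1/T * ∫ t in (0:ℝ)..T, u n t * x n t ≤ (1/T * ∫ t in (0:ℝ)..T, u n t) * e n :=
  rfm_no_goe_even_only_u0_varying_general n T hT u x e hu_cont hu_pos hx0 hxtop hxdiff hxper hxmem
    hode he0 hetop hemem heq heven hconst
end

section
/- Let f: ℝ → ℝ be continuously differentiable with f'(x) ≤ -c < 0 for all x (contraction). For any continuous T-periodic input u, every solution of ẋ = f(x) + u(t) converges to a unique T-periodic solution; moreover any two solutions x, y satisfy |x(t) - y(t)| ≤ e^{-ct}|x(0) - y(0)| for all t ≥ 0. -/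
open MeasureTheory intervalIntegral Real Filter

open Set Function Topology NNReal

/-! The difference `w` of two solutions satisfies `w' w ≤ -c w²`, because `f + c id` is
antitone; hence `(exp (c t) w t)²` is antitone, which is the exponential contraction. It makes a
periodic solution unique and attracting.

For existence, `f` tends to `∓∞` at `±∞` while `u` is bounded, so the field points inwards at
the ends of some interval `[-b, b]`, which is therefore forward invariant. Freezing `f` outside
`[-b, b]` gives a globally Lipschitz bounded field with a global flow; its time-`T` map sends
`[-b, b]` into itself, so it has a fixed point, and the solution through it is `T`-periodic by
uniqueness, stays in `[-b, b]`, and hence solves the original equation. -/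

theorem abs_le_exp_mul_abs_of_deriv_mul_le {w w' : ℝ → ℝ} {c t₀ t₁ : ℝ}
    (hw : ∀ t, HasDerivAt w (w' t) t) (hdecay : ∀ t, w' t * w t ≤ -c * w t ^ 2)
    (h : t₀ ≤ t₁) : |w t₁| ≤ exp (-c * (t₁ - t₀)) * |w t₀| := by
  have hderiv : ∀ t, HasDerivAt (fun s => (exp (c * s) * w s) ^ 2)
      (2 * exp (c * t) ^ 2 * (c * w t ^ 2 + w' t * w t)) t := fun t =>
    ((((hasDerivAt_id' t).const_mul c).exp.fun_mul (hw t)).fun_pow 2).congr_deriv (by ring)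
  have hanti : Antitone fun s => (exp (c * s) * w s) ^ 2 :=
    antitone_of_hasDerivAt_nonpos hderiv fun t =>
      mul_nonpos_of_nonneg_of_nonpos (by positivity) (by linarith [hdecay t])
  have hkey : exp (c * t₁) * |w t₁| ≤ exp (c * t₀) * |w t₀| := by
    simpa [abs_mul, abs_of_pos (exp_pos _)] using sq_le_sq.1 (hanti h)
  calc |w t₁| = exp (-(c * t₁)) * (exp (c * t₁) * |w t₁|) := by
        rw [← mul_assoc, ← exp_add, neg_add_cancel, exp_zero, one_mul]
    _ ≤ exp (-(c * t₁)) * (exp (c * t₀) * |w t₀|) := by gcongr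
    _ = exp (-c * (t₁ - t₀)) * |w t₀| := by
        rw [← mul_assoc, ← exp_add]; ring_nf

def IsContractive (c : ℝ) (v : ℝ → ℝ → ℝ) : Prop :=
  ∀ t x y, (v t x - v t y) * (x - y) ≤ -c * (x - y) ^ 2

section Contraction

variable {v : ℝ → ℝ → ℝ} {c : ℝ} {x y : ℝ → ℝ}

theorem IsIntegralCurve.abs_sub_le_exp_mul
    (hv : IsContractive c v)
    (hx : IsIntegralCurve x v) (hy : IsIntegralCurve y v) {t₀ t₁ : ℝ} (h : t₀ ≤ t₁) :
    |x t₁ - y t₁| ≤ exp (-c * (t₁ - t₀)) * |x t₀ - y t₀| :=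
  abs_le_exp_mul_abs_of_deriv_mul_le (fun t => (hx t).sub (hy t))
    (fun t => hv t (x t) (y t)) h

theorem IsIntegralCurve.eq_of_periodic (hc : 0 < c)
    (hv : IsContractive c v)
    (hx : IsIntegralCurve x v) (hy : IsIntegralCurve y v) {T : ℝ} (hT : 0 < T)
    (hxT : Periodic x T) (hyT : Periodic y T) : x = y := by
  funext t
  have hcontr := hx.abs_sub_le_exp_mul hv hy (le_add_of_nonneg_right hT.le : t ≤ t + T)
  rw [hxT t, hyT t, add_sub_cancel_left] at hcontr
  have hlt : exp (-c * T) < 1 := exp_lt_one_iff.2 (by nlinarith)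
  have : |x t - y t| = 0 := by nlinarith [abs_nonneg (x t - y t)]
  exact sub_eq_zero.1 (abs_eq_zero.1 this)

theorem IsIntegralCurve.tendsto_sub (hc : 0 < c)
    (hv : IsContractive c v)
    (hx : IsIntegralCurve x v) (hy : IsIntegralCurve y v) :
    Tendsto (fun t => x t - y t) atTop (𝓝 0) := by
  have hexp : Tendsto (fun t => exp (-c * (t - 0)) * |x 0 - y 0|) atTop (𝓝 0) := by
    have : Tendsto (fun t => -c * (t - 0)) atTop atBot := by
      simpa using tendsto_id.const_mul_atTop_of_neg (neg_neg_of_pos hc)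
    simpa using (tendsto_exp_atBot.comp this).mul_const |x 0 - y 0|
  refine squeeze_zero_norm' ?_ hexp
  filter_upwards [eventually_ge_atTop 0] with t ht using hx.abs_sub_le_exp_mul hv hy ht

end Contraction

section DerivBound

variable {f : ℝ → ℝ} {c : ℝ}

theorem antitone_add_mul_of_deriv_le (hf : Differentiable ℝ f) (hf' : ∀ x, deriv f x ≤ -c) :
    Antitone fun x => f x + c * x :=
  antitone_of_hasDerivAt_nonpos
    (fun x => (hf x).hasDerivAt.add ((hasDerivAt_id' x).const_mul c))
    fun x => show deriv f x + c * 1 ≤ 0 by linarith [hf' x]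

theorem sub_mul_sub_le_of_antitone_add_mul (h : Antitone fun x => f x + c * x) (x y : ℝ) :
    (f x - f y) * (x - y) ≤ -c * (x - y) ^ 2 := by
  rcases le_total x y with hxy | hxy
  · nlinarith [h hxy]
  · nlinarith [h hxy]

theorem exists_lt_neg_and_lt_of_antitone_add_mul (hc : 0 < c) (h : Antitone fun x => f x + c * x)
    (U : ℝ) : ∃ b, 0 ≤ b ∧ f b < -U ∧ U < f (-b) := by
  set b := (|f 0| + |U| + 1) / c
  have hcb : c * b = |f 0| + |U| + 1 := mul_div_cancel₀ _ hc.ne'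
  have hb : 0 ≤ b := by positivity
  have hright := h hb
  have hleft := h (neg_nonpos.2 hb)
  simp only [mul_zero, add_zero, mul_neg] at hright hleft
  refine ⟨b, hb, ?_, ?_⟩ <;>
    linarith [le_abs_self (f 0), neg_abs_le (f 0), le_abs_self U, neg_abs_le U]

end DerivBound

section Trapping

variable {v : ℝ → ℝ → ℝ} {x : ℝ → ℝ} {a b t₀ t : ℝ}

theorem IsIntegralCurve.le_of_forall_lt_zero (hx : IsIntegralCurve x v) (hb : ∀ t, v t b < 0)
    (h₀ : x t₀ ≤ b) (ht : t₀ ≤ t) : x t ≤ b :=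
  image_le_of_deriv_right_lt_deriv_boundary (B := fun _ => b) (B' := fun _ => 0)
    hx.continuous.continuousOn (fun s _ => (hx s).hasDerivWithinAt) h₀
    (fun _ => hasDerivAt_const _ _) (fun s _ hs => by rw [hs]; exact hb s) ⟨ht, le_rfl⟩

theorem IsIntegralCurve.mem_Icc_of_mem_Icc (hx : IsIntegralCurve x v) (ha : ∀ t, 0 < v t a)
    (hb : ∀ t, v t b < 0) (h₀ : x t₀ ∈ Icc a b) (ht : t₀ ≤ t) : x t ∈ Icc a b := by
  have hneg : IsIntegralCurve (-x) fun t z => -v t (-z) := fun t => by simpa using (hx t).neg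
  refine ⟨?_, hx.le_of_forall_lt_zero hb h₀.2 ht⟩
  simpa using hneg.le_of_forall_lt_zero (b := -a) (by simpa using ha) (by simpa using h₀.1) ht

end Trapping

section Existence

variable {E : Type*} [NormedAddCommGroup E] [NormedSpace ℝ E] [CompleteSpace E]
  {v : ℝ → E → E} {K C : ℝ≥0}

theorem exists_eq_forall_mem_Ioo_hasDerivAt_of_norm_le (hlip : ∀ t, LipschitzWith K (v t))
    (hcont : ∀ x, Continuous (v · x)) (hbdd : ∀ t x, ‖v t x‖ ≤ C) (x₀ : E) (n : ℕ) :
    ∃ γ : ℝ → E, γ 0 = x₀ ∧ ∀ t ∈ Ioo (-n : ℝ) n, HasDerivAt γ (v t (γ t)) t := by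
  have hpl : IsPicardLindelof v (tmin := -n) (tmax := n) ⟨0, by simp⟩ x₀ (C * n) 0 C K :=
    { lipschitzOnWith := fun t _ => (hlip t).lipschitzOnWith
      continuousOn := fun x _ => (hcont x).continuousOn
      norm_le := fun t _ x _ => hbdd t x
      mul_max_le := by simp }
  obtain ⟨γ, hγ0, hγ⟩ := hpl.exists_eq_forall_mem_Icc_hasDerivWithinAt₀
  exact ⟨γ, hγ0, fun t ht => (hγ t (Ioo_subset_Icc_self ht)).hasDerivAt (Icc_mem_nhds ht.1 ht.2)⟩

theorem exists_isIntegralCurve_of_norm_le (hlip : ∀ t, LipschitzWith K (v t))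
    (hcont : ∀ x, Continuous (v · x)) (hbdd : ∀ t x, ‖v t x‖ ≤ C) (x₀ : E) :
    ∃ γ : ℝ → E, γ 0 = x₀ ∧ IsIntegralCurve γ v := by
  choose γ hγ0 hγ using exists_eq_forall_mem_Ioo_hasDerivAt_of_norm_le hlip hcont hbdd x₀
  have hagree : ∀ m n : ℕ, ∀ t : ℝ, |t| < m → |t| < n → γ m t = γ n t := by
    intro m n t hm hn
    refine ODE_solution_unique_of_mem_Ioo (s := fun _ => univ)
      (fun s _ => (hlip s).lipschitzOnWith) (t₀ := 0) ?_
      (fun s hs => ⟨hγ m s ?_, trivial⟩) (fun s hs => ⟨hγ n s ?_, trivial⟩)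
      (by rw [hγ0, hγ0]) (abs_lt.1 (lt_min hm hn))
    · have : 0 < min (m : ℝ) n := (abs_nonneg t).trans_lt (lt_min hm hn)
      exact ⟨neg_neg_of_pos this, this⟩
    · exact Ioo_subset_Ioo (neg_le_neg (min_le_left _ _)) (min_le_left _ _) hs
    · exact Ioo_subset_Ioo (neg_le_neg (min_le_right _ _)) (min_le_right _ _) hs
  let N : ℝ → ℕ := fun t => ⌊|t|⌋₊ + 1
  have hN : ∀ t, |t| < N t := fun t => by simpa [N] using Nat.lt_floor_add_one |t|
  refine ⟨fun t => γ (N t) t, hγ0 _, fun t => ?_⟩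
  have hev : (fun s => γ (N s) s) =ᶠ[𝓝 t] γ (N t) := by
    filter_upwards [(isOpen_lt continuous_abs continuous_const).mem_nhds (hN t)] with s hs
      using hagree _ _ s (hN s) hs
  exact (hγ (N t) t (abs_lt.1 (hN t))).congr_of_eventuallyEq hev

end Existence

section Flow

variable {E : Type*} [NormedAddCommGroup E] [NormedSpace ℝ E] {v : ℝ → E → E} {K : ℝ≥0}

theorem continuous_eval_of_isIntegralCurve (hlip : ∀ t, LipschitzWith K (v t)) {Φ : E → ℝ → E}
    (hΦ : ∀ p, IsIntegralCurve (Φ p) v) (hΦ0 : ∀ p, Φ p 0 = p) {t : ℝ} (ht : 0 ≤ t) :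
    Continuous fun p => Φ p t := by
  refine (LipschitzWith.of_dist_le_mul (K := ⟨exp (K * t), (exp_pos _).le⟩)
    fun p q => ?_).continuous
  have := dist_le_of_trajectories_ODE hlip (hΦ p).continuous.continuousOn
    (fun s _ => (hΦ p s).hasDerivWithinAt) (hΦ q).continuous.continuousOn
    (fun s _ => (hΦ q s).hasDerivWithinAt) (by rw [hΦ0, hΦ0]) t ⟨ht, le_rfl⟩
  exact this.trans_eq (by rw [sub_zero, mul_comm]; rfl)

theorem IsIntegralCurve.periodic_of_eq (hlip : ∀ t, LipschitzWith K (v t)) {T : ℝ}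
    (hper : Periodic v T) {γ : ℝ → E} (hγ : IsIntegralCurve γ v) (h : γ T = γ 0) :
    Periodic γ T := by
  have hshift := hγ.comp_add T
  rw [show v ∘ (· + T) = v from hper.funext] at hshift
  exact congrFun (ODE_solution_unique_univ (s := fun _ => univ)
    (fun t => (hlip t).lipschitzOnWith) (fun t => ⟨hshift t, trivial⟩) (fun t => ⟨hγ t, trivial⟩)
    (t₀ := 0) (by simpa using h))

end Flow

theorem exists_periodic_isIntegralCurve_mem_Icc {v : ℝ → ℝ → ℝ} {K C : ℝ≥0} {a b T : ℝ}
    (hT : 0 < T) (hab : a ≤ b) (hlip : ∀ t, LipschitzWith K (v t))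
    (hcont : ∀ x, Continuous (v · x)) (hbdd : ∀ t x, ‖v t x‖ ≤ C) (hper : Periodic v T)
    (ha : ∀ t, 0 < v t a) (hb : ∀ t, v t b < 0) :
    ∃ γ, IsIntegralCurve γ v ∧ Periodic γ T ∧ ∀ t, γ t ∈ Icc a b := by
  choose Φ hΦ0 hΦ using exists_isIntegralCurve_of_norm_le hlip hcont hbdd
  have hmaps : ∀ p ∈ Icc a b, ∀ t, 0 ≤ t → Φ p t ∈ Icc a b := fun p hp t ht =>
    (hΦ p).mem_Icc_of_mem_Icc ha hb (by rwa [hΦ0]) ht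
  obtain ⟨p, hp, hfix⟩ := exists_mem_Icc_isFixedPt_of_mapsTo
    (continuous_eval_of_isIntegralCurve hlip hΦ hΦ0 hT.le).continuousOn hab
    fun q hq => hmaps q hq T hT.le
  have hγT : Periodic (Φ p) T := (hΦ p).periodic_of_eq hlip hper (by rw [hfix.eq, hΦ0])
  refine ⟨Φ p, hΦ p, hγT, fun t => ?_⟩
  obtain ⟨s, hs, hts⟩ := hγT.exists_mem_Ico₀ hT t
  exact hts ▸ hmaps p hp s hs.1

theorem exists_periodic_isIntegralCurve_add {f u : ℝ → ℝ} {c T : ℝ} (hc : 0 < c)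
    (hf : ContDiff ℝ 1 f) (hanti : Antitone fun x => f x + c * x) (hT : 0 < T)
    (hu : Continuous u) (huT : Periodic u T) :
    ∃ γ, IsIntegralCurve γ (fun t x => f x + u t) ∧ Periodic γ T := by
  obtain ⟨U, hU⟩ := (huT.isBounded_of_continuous hT.ne' hu).exists_norm_le
  have hUt : ∀ t, |u t| ≤ U := fun t => hU _ (mem_range_self t)
  obtain ⟨b, hb, hfb, hfa⟩ := exists_lt_neg_and_lt_of_antitone_add_mul hc hanti U
  have hab : -b ≤ b := by linarith
  obtain ⟨K, hK⟩ := hf.contDiffOn.exists_lipschitzOnWith one_ne_zero (convex_Icc (-b) b)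
    isCompact_Icc
  obtain ⟨M, hM⟩ := isCompact_Icc.exists_bound_of_continuousOn (s := Icc (-b) b)
    hf.continuous.continuousOn
  -- freezing `f` outside the trapping interval makes the field globally Lipschitz and bounded
  let w : ℝ → ℝ → ℝ := fun t x => f (projIcc (-b) b hab x) + u t
  obtain ⟨γ, hγ, hγT, hγmem⟩ := exists_periodic_isIntegralCurve_mem_Icc (v := w)
    (C := (M + U).toNNReal) hT hab
    (fun t => (hK.to_restrict.comp (LipschitzWith.projIcc hab)).add (LipschitzWith.const (u t)))
    (fun x => continuous_const.add hu)
    (fun t x => (norm_add_le _ _).trans <| (add_le_add (hM _ (projIcc (-b) b hab x).2)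
      (hUt t)).trans (le_coe_toNNReal _))
    (fun t => by simp only [w, huT t])
    (fun t => by simp only [w, projIcc_left]; linarith [neg_abs_le (u t), hUt t])
    (fun t => by simp only [w, projIcc_right]; linarith [le_abs_self (u t), hUt t])
  exact ⟨γ, fun t => by simpa [w, projIcc_of_mem hab (hγmem t)] using hγ t, hγT⟩

theorem scalar_contraction_entrainment
    (f : ℝ → ℝ) (c : ℝ) (hc : 0 < c)
    (hf : ContDiff ℝ 1 f) (hf' : ∀ x : ℝ, deriv f x ≤ -c)
    (T : ℝ) (hT : 0 < T) (u : ℝ → ℝ)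
    (hu : Continuous u) (huper : ∀ t, u (t + T) = u t) :
    (∀ x y : ℝ → ℝ,
        Differentiable ℝ x → (∀ t, deriv x t = f (x t) + u t) →
        Differentiable ℝ y → (∀ t, deriv y t = f (y t) + u t) →
        ∀ t, 0 ≤ t → |x t - y t| ≤ Real.exp (-c * t) * |x 0 - y 0|)
    ∧ ∃ γ : ℝ → ℝ,
        Differentiable ℝ γ
        ∧ (∀ t, deriv γ t = f (γ t) + u t)
        ∧ (∀ t, γ (t + T) = γ t)
        ∧ (∀ γ' : ℝ → ℝ,
            Differentiable ℝ γ' → (∀ t, deriv γ' t = f (γ' t) + u t) →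
            (∀ t, γ' (t + T) = γ' t) → γ' = γ)
        ∧ (∀ x : ℝ → ℝ,
            Differentiable ℝ x → (∀ t, deriv x t = f (x t) + u t) →
            Filter.Tendsto (fun t => x t - γ t) Filter.atTop (nhds 0)) := by
  have hanti := antitone_add_mul_of_deriv_le (hf.differentiable one_ne_zero) hf'
  have hv : IsContractive c fun t x => f x + u t := fun t x y => by
    simpa using sub_mul_sub_le_of_antitone_add_mul hanti x y
  have hsol : ∀ x : ℝ → ℝ, Differentiable ℝ x → (∀ t, deriv x t = f (x t) + u t) →
      IsIntegralCurve x fun t z => f z + u t := fun x hx hx' t => by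
    simpa only [hx' t] using (hx t).hasDerivAt
  obtain ⟨γ, hγ, hγT⟩ := exists_periodic_isIntegralCurve_add hc hf hanti hT hu huper
  refine ⟨fun x y hx hx' hy hy' t ht => ?_, γ, fun t => (hγ t).differentiableAt,
    fun t => (hγ t).deriv, hγT, fun γ' hγ' hγ'' hγ'T => ?_, fun x hx hx' => ?_⟩
  · simpa using (hsol x hx hx').abs_sub_le_exp_mul hv (hsol y hy hy') ht
  · exact (hsol γ' hγ' hγ'').eq_of_periodic hc hv hγ hT hγ'T hγT
  · exact (hsol x hx hx').tendsto_sub hc hv hγ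
end
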